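/- The formula P ∨ ¬P is provable in CL9 for a general atom P, but P ⊔ ¬P is not provable in CL9, and P ▽ ¬P is not provable in CL9. -/
import Mathlib


/-- CL9-formulas (binary versions of the connectives; negation is applied
only to atoms, i.e., formulas are in negation normal form):
`elit b i` is the elementary literal on atom `i` (negated when `b = false`),
`glit b i` is the general literal on atom `i`;
`pand`/`por` are parallel ∧/∨, `cand`/`cor` are choice ⊓/⊔,
`sand`/`sor` are sequential △/▽. -/
inductive Fml where
  | top : Fml
  | bot : Fml
  | elit : Bool → ℕ → Fml
  | glit : Bool → ℕ → Fml
  | pand : Fml → Fml → Fml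
  | por  : Fml → Fml → Fml
  | cand : Fml → Fml → Fml
  | cor  : Fml → Fml → Fml
  | sand : Fml → Fml → Fml
  | sor  : Fml → Fml → Fml
deriving DecidableEq

namespace Fml

/-- Negation, pushed to atoms via the De Morgan dualities. -/
def neg : Fml → Fml
  | top => bot
  | bot => top
  | elit b i => elit (!b) i
  | glit b i => glit (!b) i
  | pand A B => por A.neg B.neg
  | por A B => pand A.neg B.neg
  | cand A B => cor A.neg B.neg
  | cor A B => cand A.neg B.neg
  | sand A B => sor A.neg B.neg
  | sor A B => sand A.neg B.neg

/-- E → F abbreviates ¬E ∨ F. -/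
def imp (A B : Fml) : Fml := por A.neg B

/-- `SRepl G G' F H` holds iff `H` is the result of replacing in `F` one
surface occurrence of `G` (an occurrence not in the scope of a choice
connective and not in the tail of a sequential subformula) by `G'`. -/
inductive SRepl (G G' : Fml) : Fml → Fml → Prop where
  | here : SRepl G G' G G'
  | pandL {A A' B} : SRepl G G' A A' → SRepl G G' (pand A B) (pand A' B)
  | pandR {A B B'} : SRepl G G' B B' → SRepl G G' (pand A B) (pand A B')
  | porL {A A' B} : SRepl G G' A A' → SRepl G G' (por A B) (por A' B)
  | porR {A B B'} : SRepl G G' B B' → SRepl G G' (por A B) (por A B')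
  | sandL {A A' B} : SRepl G G' A A' → SRepl G G' (sand A B) (sand A' B)
  | sorL {A A' B} : SRepl G G' A A' → SRepl G G' (sor A B) (sor A' B)

/-- The elementarization of a formula: each sequential subformula is replaced
by its head (capitalization), each surface ⊓-subformula by ⊤, each surface
⊔-subformula by ⊥, and each surface general literal by ⊥. -/
def elz : Fml → Fml
  | top => top
  | bot => bot
  | elit b i => elit b i
  | glit _ _ => bot
  | pand A B => pand (elz A) (elz B)
  | por A B => por (elz A) (elz B)
  | cand _ _ => top
  | cor _ _ => bot
  | sand A _ => elz A
  | sor A _ => elz A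

/-- Classical evaluation of a formula under a truth assignment (only its
values on elementary formulas matter). -/
def eval (v : ℕ → Bool) : Fml → Bool
  | top => true
  | bot => false
  | elit b i => if b then v i else !(v i)
  | glit _ _ => false
  | pand A B => eval v A && eval v B
  | por A B => eval v A || eval v B
  | cand A B => eval v A && eval v B
  | cor A B => eval v A || eval v B
  | sand A _ => eval v A
  | sor A _ => eval v A

/-- Classical tautologyhood. -/
def Taut (F : Fml) : Prop := ∀ v : ℕ → Bool, eval v F = true

/-- A formula is stable iff its elementarization is a classical tautology. -/
def Stable (F : Fml) : Prop := Taut (elz F)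

/-- The elementary atom `q` occurs in the formula. -/
def elemOccurs (q : ℕ) : Fml → Prop
  | top => False
  | bot => False
  | elit _ i => i = q
  | glit _ _ => False
  | pand A B => elemOccurs q A ∨ elemOccurs q B
  | por A B => elemOccurs q A ∨ elemOccurs q B
  | cand A B => elemOccurs q A ∨ elemOccurs q B
  | cor A B => elemOccurs q A ∨ elemOccurs q B
  | sand A B => elemOccurs q A ∨ elemOccurs q B
  | sor A B => elemOccurs q A ∨ elemOccurs q B

end Fml

open Fml

/-- The proof system CL9, given by the rules Wait, Choose, Switch and Match. -/
inductive CL9 : Fml → Prop where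
  /-- Wait: `F` is stable, and every result of replacing a surface
  ⊓-subformula of `F` by one of its conjuncts is provable, and every result
  of replacing a surface △-subformula of `F` by its tail is provable. -/
  | wait (F : Fml) (hst : Stable F)
      (hcand₁ : ∀ A B H, SRepl (cand A B) A F H → CL9 H)
      (hcand₂ : ∀ A B H, SRepl (cand A B) B F H → CL9 H)
      (hsand : ∀ A B H, SRepl (sand A B) B F H → CL9 H) :
      CL9 F
  /-- Choose: replace a surface ⊔-subformula by one of its disjuncts. -/
  | choose {F H : Fml} (A B : Fml)
      (h : SRepl (cor A B) A F H ∨ SRepl (cor A B) B F H)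
      (hp : CL9 H) : CL9 F
  /-- Switch: replace a surface ▽-subformula by its tail. -/
  | switch {F H : Fml} (A B : Fml)
      (h : SRepl (sor A B) B F H)
      (hp : CL9 H) : CL9 F
  /-- Match: replace one positive and one negative surface occurrence of a
  general atom `P` by a fresh elementary atom `q`. -/
  | match' {F H : Fml} (F₁ : Fml) (P q : ℕ)
      (hfresh : ¬ elemOccurs q F)
      (h₁ : SRepl (glit true P) (elit true q) F F₁)
      (h₂ : SRepl (glit false P) (elit false q) F₁ H)
      (hp : CL9 H) : CL9 F

lemma noCL9glit (b : Bool) (i : ℕ) : ¬ CL9 (glit b i) := by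
  intro h
  generalize hF : glit b i = F at h
  induction h generalizing b i with
  | wait F hst _ _ _ =>
    subst hF
    have := hst (fun _ => true)
    simp [elz, eval] at this
  | choose A B h hp ih =>
    subst hF
    rcases h with h | h <;> cases h
  | switch A B h hp ih =>
    subst hF; cases h
  | match' F₁ P q hfresh h₁ h₂ hp ih =>
    subst hF
    cases h₁
    cases h₂

lemma noCL9cor (i : ℕ) : ¬ CL9 (cor (glit true i) (glit false i)) := by
  intro h
  cases h with
  | wait F hst _ _ _ =>
    have := hst (fun _ => true)
    simp [elz, eval] at this
  | choose A B h hp =>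
    rcases h with h | h <;> cases h <;> exact noCL9glit _ _ hp
  | switch A B h hp => cases h
  | match' F₁ P q hfresh h₁ h₂ hp => cases h₁

lemma noCL9sor (i : ℕ) : ¬ CL9 (sor (glit true i) (glit false i)) := by
  intro h
  cases h with
  | wait F hst _ _ _ =>
    have := hst (fun _ => true)
    simp [elz, eval] at this
  | choose A B h hp =>
    rcases h with h | h <;> cases h <;> rename_i h' <;> cases h'
  | switch A B h hp =>
    cases h with
    | here => exact noCL9glit _ _ hp
    | sorL h' => cases h'
  | match' F₁ P q hfresh h₁ h₂ hp =>
    cases h₁ with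
    | sorL h' =>
      cases h'
      cases h₂ with
      | sorL h'' => cases h''

/-- CL9 proves P ∨ ¬P, but proves neither P ⊔ ¬P nor P ▽ ¬P,
for a general atom P. -/
theorem stmt8 (i : ℕ) :
    CL9 (Fml.por (Fml.glit true i) (Fml.glit false i)) ∧
    ¬ CL9 (Fml.cor (Fml.glit true i) (Fml.glit false i)) ∧
    ¬ CL9 (Fml.sor (Fml.glit true i) (Fml.glit false i)) := by
  refine ⟨?_, noCL9cor i, noCL9sor i⟩
  apply CL9.match' (por (elit true 0) (glit false i)) i 0
  · simp [elemOccurs]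
  · exact SRepl.porL SRepl.here
  · exact SRepl.porR SRepl.here
  · apply CL9.wait
    · intro v
      simp [elz, eval]
    · intro A B H h
      cases h <;> rename_i h' <;> cases h'
    · intro A B H h
      cases h <;> rename_i h' <;> cases h'
    · intro A B H h
      cases h <;> rename_i h' <;> cases h'
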